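/- arXiv:2101.11264 — 4 statements merged into one kernel-verified Lean document; each statement's English description precedes it below -/
import Mathlib

section
/- Every polynomial f ∈ R that is invariant under the diagonal S_n-action lies in 𝒮 + J; that is, there exist s ∈ 𝒮 and h ∈ J with f = s + h. (This is the algebraic form of the theorem that H*(B_com U(n); ℝ) ≅ (ℝ[x_1,…,x_n] ⊗ ℝ[y_1,…,y_n])^{S_n}/J is generated as an ℝ-algebra by the sets Φ^k(Im ι), k ∈ ℤ \ {0}, where ι : H*(BU(n);ℝ) → H*(B_com U(n);ℝ) is induced by z_i ↦ x_i + y_i.) -/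
open MvPolynomial

/-- The `k`-th power map `Φ^k : R → R`, the ℝ-algebra endomorphism with
`Φ^k(x_i) = x_i` and `Φ^k(y_i) = k·y_i`, where `x_i = X (Sum.inl i)`,
`y_i = X (Sum.inr i)` in `R = ℝ[x_1,…,x_n,y_1,…,y_n]`. -/
noncomputable def Φ (n : ℕ) (k : ℤ) :
    MvPolynomial (Fin n ⊕ Fin n) ℝ →ₐ[ℝ] MvPolynomial (Fin n ⊕ Fin n) ℝ :=
  aeval (Sum.elim (fun i => X (Sum.inl i)) (fun i => C (k : ℝ) * X (Sum.inr i)))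

/-- `ι : ℝ[z_1,…,z_n] → R`, `z_i ↦ x_i + y_i`. -/
noncomputable def ι (n : ℕ) :
    MvPolynomial (Fin n) ℝ →ₐ[ℝ] MvPolynomial (Fin n ⊕ Fin n) ℝ :=
  aeval (fun i => X (Sum.inl i) + X (Sum.inr i))

/-- The subalgebra `𝒮` generated by `Φ^k(q(x_1+y_1,…,x_n+y_n))` for `k ∈ ℤ \ {0}`
and `q` a symmetric polynomial. -/
noncomputable def Scal (n : ℕ) : Subalgebra ℝ (MvPolynomial (Fin n ⊕ Fin n) ℝ) :=
  Algebra.adjoin ℝ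
    {f | ∃ k : ℤ, k ≠ 0 ∧ ∃ q : MvPolynomial (Fin n) ℝ, q.IsSymmetric ∧ f = Φ n k (ι n q)}

/-- The ideal `J` generated by the positive-degree symmetric polynomials in the
variables `x_1,…,x_n` alone. -/
noncomputable def Jx (n : ℕ) : Ideal (MvPolynomial (Fin n ⊕ Fin n) ℝ) :=
  Ideal.span
    {f | ∃ g : MvPolynomial (Fin n) ℝ, g.IsSymmetric ∧ 0 < g.totalDegree ∧
      f = rename Sum.inl g}

/-!
Averaging over `S_n` writes an invariant polynomial as a combination of orbit sums of monomials,
which are augmented monomial functions `∑_{φ injective} ∏_t x_{φ t}^{a_t} y_{φ t}^{b_t}`.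
Multiplying one with `r` factors by a polarized power sum `p_{a,b} = ∑_i x_i^a y_i^b` gives the one
with `r + 1` factors plus the `r` terms where the new point collides with an old one, so by
induction all of them lie in the algebra generated by the `p_{a,b}`. Finally
`Φ^k ι(p_m) = ∑_i (x_i + k y_i)^m = ∑_j k^j (m choose j) p_{m-j,j}`, and interpolating in `k` at the
nonzero nodes `1, …, m + 1` recovers every coefficient, the constant one `p_{m,0}` included; hence
every invariant lies in `𝒮` itself.
-/

open Finset

theorem Submodule.mem_span_range_sum_pow_smul {K M : Type*} [Field K] [AddCommGroup M]
    [Module K M] {m : ℕ} {v : Fin m → K} (hv : Function.Injective v) (u : Fin m → M)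
    (j : Fin m) : u j ∈ span K (Set.range fun k => ∑ i : Fin m, v k ^ (i : ℕ) • u i) := by
  set V := Matrix.vandermonde v
  have hV : IsUnit V.det := (Matrix.det_vandermonde_ne_zero_iff.mpr hv).isUnit
  have hu : u j = ∑ k, V⁻¹ j k • ∑ i, V k i • u i := by
    simp only [smul_sum, smul_smul]
    rw [sum_comm]
    simp only [← sum_smul, ← Matrix.mul_apply, Matrix.nonsing_inv_mul V hV, Matrix.one_apply,
      ite_smul, one_smul, zero_smul, sum_ite_eq, mem_univ, if_true]
  rw [hu]
  exact sum_mem fun k _ => Submodule.smul_mem _ _ (Submodule.subset_span ⟨k, rfl⟩)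

theorem MvPolynomial.mem_of_forall_sum_monomial_mem {K σ G : Type*} [Field K] [CharZero K]
    [Fintype G] [Nonempty G] (ρ : G → MvPolynomial σ K →ₗ[K] MvPolynomial σ K)
    (M : Submodule K (MvPolynomial σ K)) (hM : ∀ d, ∑ g, ρ g (monomial d 1) ∈ M)
    {f : MvPolynomial σ K} (hf : ∀ g, ρ g f = f) : f ∈ M := by
  have hsum : (Fintype.card G : K) • f =
      ∑ d ∈ f.support, f.coeff d • ∑ g, ρ g (monomial d 1) :=
    calc (Fintype.card G : K) • f
        = ∑ g, ρ g f := by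
          rw [sum_congr rfl fun g _ => hf g, sum_const, card_univ, Nat.cast_smul_eq_nsmul]
      _ = ∑ g, ∑ d ∈ f.support, f.coeff d • ρ g (monomial d 1) := by
        refine sum_congr rfl fun g _ => ?_
        conv_lhs => rw [f.as_sum]
        simp only [map_sum, ← map_smul, smul_eq_mul, mul_one]
      _ = _ := by rw [sum_comm]; simp only [smul_sum]
  have hG : (Fintype.card G : K) ≠ 0 := Nat.cast_ne_zero.mpr Fintype.card_ne_zero
  refine (M.smul_mem_iff hG).mp ?_
  rw [hsum]
  exact sum_mem fun d _ => M.smul_mem _ (hM d)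

theorem Fintype.sum_ite_mem_range_eq {ι M : Type*} [Fintype ι] [DecidableEq ι]
    [AddCommGroup M] {r : ℕ} {ψ : Fin r → ι}
    (hψ : Function.Injective ψ) (g : ι → M) :
    ∑ j, (if j ∈ Set.range ψ then 0 else g j) = ∑ j, g j - ∑ t, g (ψ t) := by
  have h_range : ∑ t, g (ψ t) = ∑ j, if j ∈ Set.range ψ then g j else 0 := by
    rw [← sum_filter, ← sum_image fun _ _ _ _ h => hψ h]
    congr 1
    ext j
    simp
  rw [h_range, eq_sub_iff_add_eq, ← sum_add_distrib]
  refine Fintype.sum_congr _ _ fun j => ?_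
  split_ifs <;> simp

namespace MvPolynomial

variable {ι : Type*} (R : Type*) [CommRing R]

noncomputable def pairMonomial (i : ι) (v : ℕ × ℕ) : MvPolynomial (ι ⊕ ι) R :=
  X (Sum.inl i) ^ v.1 * X (Sum.inr i) ^ v.2

variable {R} in
theorem pairMonomial_add (i : ι) (v w : ℕ × ℕ) :
    pairMonomial R i (v + w) = pairMonomial R i v * pairMonomial R i w := by
  simp only [pairMonomial, Prod.fst_add, Prod.snd_add, pow_add]
  ring

variable (ι) [Fintype ι]

noncomputable def polarizedPsum (v : ℕ × ℕ) : MvPolynomial (ι ⊕ ι) R :=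
  ∑ i, pairMonomial R i v

variable {ι} [DecidableEq ι]

noncomputable def augmentedMonomial {r : ℕ} (e : Fin r → ℕ × ℕ) : MvPolynomial (ι ⊕ ι) R :=
  ∑ φ : Fin r → ι, if Function.Injective φ then ∏ t, pairMonomial R (φ t) (e t) else 0

variable {R}

theorem augmentedMonomial_zero (e : Fin 0 → ℕ × ℕ) :
    augmentedMonomial R (ι := ι) e = 1 := by
  simp [augmentedMonomial, Function.injective_of_subsingleton]

theorem augmentedMonomial_succ {r : ℕ} (e : Fin (r + 1) → ℕ × ℕ) :
    augmentedMonomial R (ι := ι) e =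
      augmentedMonomial R (Fin.tail e) * polarizedPsum ι R (e 0) -
        ∑ t, augmentedMonomial R (Function.update (Fin.tail e) t (Fin.tail e t + e 0)) := by
  set P : (Fin r → ι) → MvPolynomial (ι ⊕ ι) R := fun ψ => ∏ t, pairMonomial R (ψ t) (e t.succ)
  have h_cons : ∀ j ψ, ∏ t, pairMonomial R (Fin.cons j ψ t : ι) (e t) =
      pairMonomial R j (e 0) * P ψ := fun j ψ => Fin.prod_univ_succ _
  have h_merge : ∀ ψ t, pairMonomial R (ψ t) (e 0) * P ψ =
      ∏ u, pairMonomial R (ψ u) (Function.update (Fin.tail e) t (Fin.tail e t + e 0) u) := by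
    intro ψ t
    have h_erase : ∏ u ∈ univ.erase t, pairMonomial R (ψ u)
        (Function.update (Fin.tail e) t (Fin.tail e t + e 0) u) =
          ∏ u ∈ univ.erase t, pairMonomial R (ψ u) (e u.succ) :=
      prod_congr rfl fun u hu => by rw [Function.update_of_ne (mem_erase.mp hu).1]; rfl
    simp only [P]
    rw [← mul_prod_erase univ _ (mem_univ t), ← mul_prod_erase univ _ (mem_univ t), h_erase,
      Function.update_self, pairMonomial_add]
    simp only [Fin.tail]
    ring
  calc augmentedMonomial R e
      = ∑ ψ : Fin r → ι, if Function.Injective ψ then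
          ∑ j, (if j ∈ Set.range ψ then 0 else pairMonomial R j (e 0) * P ψ) else 0 := by
        rw [augmentedMonomial, ← (Fin.consEquiv fun _ => ι).sum_comp, Fintype.sum_prod_type,
          sum_comm]
        simp only [show ⇑(Fin.consEquiv fun _ => ι) =
          fun p : ι × (Fin r → ι) => (Fin.cons p.1 p.2 : Fin (r + 1) → ι) from rfl]
        refine sum_congr rfl fun ψ _ => ?_
        split_ifs with hψ
        · refine sum_congr rfl fun j _ => ?_
          simp only [Fin.cons_injective_iff, hψ, and_true, h_cons]
          exact ite_not _ _ _
        · simp [Fin.cons_injective_iff, hψ]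
    _ = ∑ ψ : Fin r → ι, ((if Function.Injective ψ then P ψ else 0) * polarizedPsum ι R (e 0) -
          ∑ t, if Function.Injective ψ then pairMonomial R (ψ t) (e 0) * P ψ else 0) := by
        refine sum_congr rfl fun ψ _ => ?_
        split_ifs with hψ
        · rw [Fintype.sum_ite_mem_range_eq hψ, polarizedPsum, mul_sum]
          simp only [mul_comm (P ψ)]
        · simp
    _ = _ := by
        rw [sum_sub_distrib, ← sum_mul, sum_comm]
        simp only [h_merge, augmentedMonomial]
        rfl

theorem augmentedMonomial_mem_adjoin {r : ℕ} (e : Fin r → ℕ × ℕ) :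
    augmentedMonomial R (ι := ι) e ∈ Algebra.adjoin R (Set.range (polarizedPsum ι R)) := by
  induction r with
  | zero => rw [augmentedMonomial_zero]; exact one_mem _
  | succ r ih =>
    rw [augmentedMonomial_succ]
    exact sub_mem (mul_mem (ih _) (Algebra.subset_adjoin ⟨e 0, rfl⟩)) (sum_mem fun t _ => ih _)

theorem sum_perm_rename_monomial (n : ℕ) (d : Fin n ⊕ Fin n →₀ ℕ) :
    ∑ σ : Equiv.Perm (Fin n), rename (Sum.map σ σ) (monomial d (1 : R)) =
      augmentedMonomial R fun i => (d (Sum.inl i), d (Sum.inr i)) := by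
  have h_rename : ∀ σ : Equiv.Perm (Fin n), rename (Sum.map σ σ) (monomial d (1 : R)) =
      ∏ i, pairMonomial R (σ i) (d (Sum.inl i), d (Sum.inr i)) := by
    intro σ
    rw [monomial_eq, C_1, one_mul, Finsupp.prod_fintype _ _ fun _ => pow_zero _, map_prod,
      Fintype.prod_sum_type, ← prod_mul_distrib]
    simp [pairMonomial]
  rw [augmentedMonomial, ← sum_filter, Fintype.sum_congr _ _ h_rename]
  refine sum_bij' (fun σ _ => ⇑σ) (fun φ hφ => Equiv.ofBijective φ
    (Finite.injective_iff_bijective.mp (mem_filter.mp hφ).2)) (fun σ _ => ?_)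
    (fun _ _ => mem_univ _) (fun _ _ => Equiv.ext fun _ => rfl) (fun _ _ => rfl) (fun _ _ => rfl)
  exact mem_filter.mpr ⟨mem_univ _, σ.injective⟩

end MvPolynomial

theorem Φ_ι_psum (n : ℕ) (k : ℤ) (m : ℕ) :
    Φ n k (ι n (psum (Fin n) ℝ m)) =
      ∑ j : Fin (m + 1),
        (k : ℝ) ^ (j : ℕ) • ((m.choose j : ℝ) • polarizedPsum (Fin n) ℝ (m - j, j)) := by
  have h_point : ∀ i : Fin n, (X (Sum.inl i) + C (k : ℝ) * X (Sum.inr i)) ^ m =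
      ∑ j : Fin (m + 1), (k : ℝ) ^ (j : ℕ) • ((m.choose j : ℝ) • pairMonomial ℝ i (m - j, j)) := by
    intro i
    rw [add_comm, add_pow, ← Fin.sum_univ_eq_sum_range]
    refine Fintype.sum_congr _ _ fun j => ?_
    simp only [pairMonomial, smul_eq_C_mul, mul_pow, ← C_pow, map_natCast]
    ring
  simp only [psum, ι, Φ, map_sum, map_pow, map_add, aeval_X, Sum.elim_inl, Sum.elim_inr, h_point]
  rw [sum_comm]
  simp only [polarizedPsum, smul_sum]

theorem polarizedPsum_mem_Scal (n : ℕ) (v : ℕ × ℕ) : polarizedPsum (Fin n) ℝ v ∈ Scal n := by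
  obtain ⟨a, b⟩ := v
  set m := a + b
  set u : Fin (m + 1) → MvPolynomial (Fin n ⊕ Fin n) ℝ :=
    fun j => (m.choose j : ℝ) • polarizedPsum (Fin n) ℝ (m - j, j)
  have h_inj : Function.Injective fun k : Fin (m + 1) => ((k : ℕ) : ℝ) + 1 := by
    intro k l h
    exact Fin.ext (by exact_mod_cast add_right_cancel h)
  have h_gen : Set.range (fun k : Fin (m + 1) =>
      ∑ i : Fin (m + 1), (((k : ℕ) : ℝ) + 1) ^ (i : ℕ) • u i) ⊆
        (Subalgebra.toSubmodule (Scal n) : Set _) := by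
    rintro _ ⟨k, rfl⟩
    refine Algebra.subset_adjoin ⟨k + 1, by omega, psum (Fin n) ℝ m, psum_isSymmetric _ _ m, ?_⟩
    rw [Φ_ι_psum]
    push_cast
    rfl
  have h_choose : (m.choose b : ℝ) • polarizedPsum (Fin n) ℝ (a, b) ∈ Scal n := by
    have h_span := Submodule.mem_span_range_sum_pow_smul h_inj u ⟨b, by omega⟩
    simpa [u, m] using Submodule.span_le.mpr h_gen h_span
  exact ((Subalgebra.toSubmodule (Scal n)).smul_mem_iff
    (Nat.cast_ne_zero.mpr (Nat.choose_pos (by omega)).ne')).mp h_choose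

theorem mem_Scal_of_forall_rename_eq {n : ℕ} {f : MvPolynomial (Fin n ⊕ Fin n) ℝ}
    (hf : ∀ σ : Equiv.Perm (Fin n), rename (Sum.map σ σ) f = f) : f ∈ Scal n := by
  refine mem_of_forall_sum_monomial_mem (fun σ : Equiv.Perm (Fin n) =>
    (rename (R := ℝ) (Sum.map σ σ)).toLinearMap) (Subalgebra.toSubmodule (Scal n)) (fun d => ?_) hf
  have h_adjoin : Algebra.adjoin ℝ (Set.range (polarizedPsum (Fin n) ℝ)) ≤ Scal n :=
    Algebra.adjoin_le (Set.range_subset_iff.mpr (polarizedPsum_mem_Scal n))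
  simp only [AlgHom.toLinearMap_apply, sum_perm_rename_monomial]
  exact h_adjoin (augmentedMonomial_mem_adjoin _)

theorem stmt4_general (n : ℕ) (f : MvPolynomial (Fin n ⊕ Fin n) ℝ)
    (hf : ∀ σ : Equiv.Perm (Fin n), rename (Sum.map σ σ) f = f) :
    ∃ s ∈ Scal n, ∃ h ∈ Jx n, f = s + h :=
  ⟨f, mem_Scal_of_forall_rename_eq hf, 0, zero_mem _, (add_zero f).symm⟩

/-- every polynomial `f ∈ R` invariant under the diagonal `S_n`-action
(`σ·x_i = x_{σ(i)}`, `σ·y_i = y_{σ(i)}`) lies in `𝒮 + J`. -/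
theorem stmt4 (n : ℕ) (hn : 1 ≤ n) (f : MvPolynomial (Fin n ⊕ Fin n) ℝ)
    (hf : ∀ σ : Equiv.Perm (Fin n), rename (Sum.map σ σ) f = f) :
    ∃ s ∈ Scal n, ∃ h ∈ Jx n, f = s + h :=
  stmt4_general n f hf
end

section
/- Let J̃ ⊆ R be the ideal generated by the power sums x_1^i + ⋯ + x_n^i for 1 ≤ i ≤ n together with y_1 + ⋯ + y_n. Then every polynomial f ∈ R that is invariant under the diagonal S_n-action lies in 𝒮 + J̃. (This is the algebraic form of the theorem that H*(B_com SU(n); ℝ) ≅ (ℝ[x_1,…,x_n] ⊗ ℝ[y_1,…,y_n])^{S_n}/J̃ is generated as an ℝ-algebra by the sets Φ^k(Im ι), k ∈ ℤ \ {0}.) -/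
open MvPolynomial

/-- The ideal `J̃` generated by the power sums `x_1^i + ⋯ + x_n^i` for `1 ≤ i ≤ n`
together with `y_1 + ⋯ + y_n`. -/
noncomputable def Jtilde (n : ℕ) : Ideal (MvPolynomial (Fin n ⊕ Fin n) ℝ) :=
  Ideal.span
    {f | (∃ i : ℕ, 1 ≤ i ∧ i ≤ n ∧ f = ∑ j : Fin n, X (Sum.inl j) ^ i) ∨
      f = ∑ j : Fin n, X (Sum.inr j)}

/-!
Over a field of characteristic zero the diagonal invariants of `S_n` are spanned by the
symmetrizations `Σ(e)` of the monomials `∏ xᵢ^{aᵢ} yᵢ^{bᵢ}`, and these lie in the algebra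
generated by the polarized power sums `P_{(a,b)} = ∑ᵢ xᵢ^a yᵢ^b` (Weyl), by induction on the
number of `i` with `(aᵢ, bᵢ) ≠ 0`. Each `P_{(a,b)}` lies in `𝒮`: with `m = a + b`,
`Φ^k(ι(p_m)) = ∑ⱼ C(m,j) kʲ P_{(m-j,j)}`, and the values `k = 1, …, m + 1` give a Vandermonde
system that can be solved for the `P_{(m-j,j)}`. So the invariant `f` lies in `𝒮` itself.
-/

section LinearSystem

variable {R M ι : Type*} [CommRing R] [AddCommGroup M] [Module R M] [Fintype ι] [DecidableEq ι]

theorem Submodule.mem_of_forall_sum_smul_mem (S : Submodule R M) {A : Matrix ι ι R}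
    (hA : IsUnit A.det) {v : ι → M} (hv : ∀ k, ∑ j, A k j • v j ∈ S) (i : ι) : v i ∈ S := by
  have hinv : v i = ∑ k, A⁻¹ i k • ∑ j, A k j • v j := by
    simp only [Finset.smul_sum, smul_smul]
    rw [Finset.sum_comm]
    simp only [← Finset.sum_smul, ← Matrix.mul_apply, Matrix.nonsing_inv_mul A hA,
      Matrix.one_apply, ite_smul, one_smul, zero_smul, Finset.sum_ite_eq, Finset.mem_univ, if_true]
  rw [hinv]
  exact S.sum_mem fun k _ => S.smul_mem _ (hv k)

end LinearSystem

namespace Multisymmetric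

variable {n : ℕ}

local notation "R" n => MvPolynomial (Fin n ⊕ Fin n) ℝ

noncomputable def diagMonomial (e : Fin n → ℕ × ℕ) : R n :=
  ∏ i, X (Sum.inl i) ^ (e i).1 * X (Sum.inr i) ^ (e i).2

noncomputable def polarizedPowerSum (n : ℕ) (p : ℕ × ℕ) : R n :=
  ∑ i : Fin n, X (Sum.inl i) ^ p.1 * X (Sum.inr i) ^ p.2

noncomputable def symmetrize (n : ℕ) : (R n) →ₗ[ℝ] R n :=
  ∑ σ : Equiv.Perm (Fin n), (rename (Sum.map σ σ)).toLinearMap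

theorem symmetrize_apply (f : R n) :
    symmetrize n f = ∑ σ : Equiv.Perm (Fin n), rename (Sum.map σ σ) f :=
  LinearMap.sum_apply _ _ _

theorem diagMonomial_add (e e' : Fin n → ℕ × ℕ) :
    diagMonomial (e + e') = diagMonomial e * diagMonomial e' := by
  simp only [diagMonomial, ← Finset.prod_mul_distrib, Pi.add_apply, Prod.fst_add, Prod.snd_add,
    pow_add]
  exact Finset.prod_congr rfl fun _ _ => by ring

theorem diagMonomial_single (i : Fin n) (p : ℕ × ℕ) :
    diagMonomial (Pi.single i p) = X (Sum.inl i) ^ p.1 * X (Sum.inr i) ^ p.2 := by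
  rw [diagMonomial, Finset.prod_eq_single i (fun j _ hj => by simp [hj]) (by simp)]
  simp

theorem rename_diagMonomial (σ : Equiv.Perm (Fin n)) (e : Fin n → ℕ × ℕ) :
    rename (Sum.map σ σ) (diagMonomial e) = diagMonomial (e ∘ σ.symm) := by
  simp only [diagMonomial, map_prod, map_mul, map_pow, rename_X, Sum.map_inl, Sum.map_inr]
  exact Fintype.prod_equiv σ _ _ fun i => by simp

theorem monomial_eq_smul_diagMonomial (d : (Fin n ⊕ Fin n) →₀ ℕ) (c : ℝ) :
    monomial d c = c • diagMonomial fun i => (d (Sum.inl i), d (Sum.inr i)) := by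
  rw [monomial_eq, Finsupp.prod_fintype _ _ fun _ => pow_zero _, Fintype.prod_sum_type,
    ← Finset.prod_mul_distrib, smul_eq_C_mul, diagMonomial]

theorem rename_polarizedPowerSum (σ : Equiv.Perm (Fin n)) (p : ℕ × ℕ) :
    rename (Sum.map σ σ) (polarizedPowerSum n p) = polarizedPowerSum n p := by
  simp only [polarizedPowerSum, map_sum, map_mul, map_pow, rename_X, Sum.map_inl, Sum.map_inr]
  exact Fintype.sum_equiv σ _ _ fun _ => rfl

theorem symmetrize_rename (τ : Equiv.Perm (Fin n)) (f : R n) :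
    symmetrize n (rename (Sum.map τ τ) f) = symmetrize n f := by
  simp only [symmetrize_apply, rename_rename, Sum.map_comp_map]
  exact Fintype.sum_equiv (Equiv.mulRight τ) _ _ fun σ => by simp [Equiv.Perm.coe_mul]

theorem symmetrize_of_invariant {f : R n}
    (hf : ∀ σ : Equiv.Perm (Fin n), rename (Sum.map σ σ) f = f) :
    symmetrize n f = (Fintype.card (Equiv.Perm (Fin n)) : ℝ) • f := by
  simp [symmetrize_apply, hf, Finset.sum_const, Nat.cast_smul_eq_nsmul]

theorem symmetrize_mul_of_invariant {g : R n}
    (hg : ∀ σ : Equiv.Perm (Fin n), rename (Sum.map σ σ) g = g) (f : R n) :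
    symmetrize n (g * f) = g * symmetrize n f := by
  simp [symmetrize_apply, hg, Finset.mul_sum]

theorem polarizedPowerSum_mul_symmetrize (p : ℕ × ℕ) (w : Fin n → ℕ × ℕ) :
    polarizedPowerSum n p * symmetrize n (diagMonomial w) =
      ∑ i, symmetrize n (diagMonomial (w + Pi.single i p)) := by
  rw [← symmetrize_mul_of_invariant (rename_polarizedPowerSum · p), polarizedPowerSum,
    Finset.sum_mul, map_sum]
  simp only [diagMonomial_add, diagMonomial_single, mul_comm]

theorem symmetrize_diagMonomial_comp (e : Fin n → ℕ × ℕ) (τ : Equiv.Perm (Fin n)) :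
    symmetrize n (diagMonomial (e ∘ τ)) = symmetrize n (diagMonomial e) := by
  conv_rhs => rw [← symmetrize_rename τ.symm, rename_diagMonomial, Equiv.symm_symm]

theorem symmetrize_diagMonomial_mem {S : Subalgebra ℝ (R n)}
    (hS : ∀ p ≠ 0, polarizedPowerSum n p ∈ S) (e : Fin n → ℕ × ℕ) :
    symmetrize n (diagMonomial e) ∈ S := by
  induction hr : (Function.support e).ncard using Nat.strong_induction_on generalizing e with
  | _ r ih =>
  obtain he | ⟨i₀, hi₀⟩ := (Function.support e).eq_empty_or_nonempty
  · obtain rfl : e = 0 := Function.support_eq_empty_iff.mp he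
    have h1 : diagMonomial (0 : Fin n → ℕ × ℕ) = 1 := by simp [diagMonomial]
    rw [h1, symmetrize_of_invariant fun σ => map_one _]
    exact S.smul_mem S.one_mem _
  set p := e i₀
  set w := Function.update e i₀ 0
  have hw_lt : (Function.support w).ncard < r := by
    rw [Function.support_update_zero, ← hr]
    exact Set.ncard_sdiff_singleton_lt_of_mem hi₀
  have hswap : ∀ i, w i = 0 → w + Pi.single i p = e ∘ Equiv.swap i i₀ := by
    intro i hi
    funext k
    rcases eq_or_ne k i with rfl | hki
    · simp [hi, p]
    rcases eq_or_ne k i₀ with rfl | hki₀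
    · simpa [w, hki, Equiv.swap_apply_right, Function.update_of_ne hki.symm] using hi.symm
    · simp [w, hki, hki₀, Equiv.swap_apply_of_ne_of_ne]
  have hgrow : ∀ i, w i ≠ 0 → (Function.support (w + Pi.single i p)).ncard < r := by
    intro i hi
    refine lt_of_le_of_lt (Set.ncard_le_ncard fun k hk => ?_) hw_lt
    rcases eq_or_ne k i with rfl | hki
    · exact hi
    · simpa [hki] using hk
  -- In `P_p · Σ(w) = ∑ᵢ Σ(w + p δᵢ)`, every term with `w i = 0` is a permuted copy of `Σ(e)`,
  -- and every other term has smaller support than `e`.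
  have hkey := polarizedPowerSum_mul_symmetrize p w
  rw [← Finset.sum_filter_add_sum_filter_not _ (fun i => w i = 0),
    Finset.sum_congr rfl fun i hi => by
      rw [hswap i (Finset.mem_filter.mp hi).2, symmetrize_diagMonomial_comp],
    Finset.sum_const, ← Nat.cast_smul_eq_nsmul ℝ] at hkey
  have hcard : ((Finset.univ.filter fun i => w i = 0).card : ℝ) ≠ 0 := by
    exact_mod_cast (Finset.card_pos.mpr ⟨i₀, by simp [w]⟩).ne'
  refine (Submodule.smul_mem_iff (Subalgebra.toSubmodule S) hcard).mp ?_
  rw [eq_sub_of_add_eq hkey.symm]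
  exact S.sub_mem (S.mul_mem (hS p hi₀) (ih _ hw_lt w rfl))
    (S.sum_mem fun i hi => ih _ (hgrow i (Finset.mem_filter.mp hi).2) _ rfl)

theorem symmetrize_mem {S : Subalgebra ℝ (R n)} (hS : ∀ p ≠ 0, polarizedPowerSum n p ∈ S)
    (f : R n) : symmetrize n f ∈ S := by
  induction f using MvPolynomial.induction_on' with
  | monomial d c =>
    rw [monomial_eq_smul_diagMonomial, map_smul]
    exact S.smul_mem (symmetrize_diagMonomial_mem hS _) c
  | add p q hp hq => rw [map_add]; exact S.add_mem hp hq

theorem mem_of_invariant {S : Subalgebra ℝ (R n)} (hS : ∀ p ≠ 0, polarizedPowerSum n p ∈ S)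
    {f : R n} (hf : ∀ σ : Equiv.Perm (Fin n), rename (Sum.map σ σ) f = f) : f ∈ S := by
  have h := symmetrize_mem hS f
  rw [symmetrize_of_invariant hf] at h
  exact (Submodule.smul_mem_iff (Subalgebra.toSubmodule S) (by positivity)).mp h

theorem Φ_ι_psum (m : ℕ) (k : ℤ) :
    Φ n k (ι n (psum (Fin n) ℝ m)) =
      ∑ j : Fin (m + 1), ((k : ℝ) ^ (j : ℕ) * m.choose j) • polarizedPowerSum n (m - j, j) := by
  simp only [psum, ι, Φ, map_sum, map_pow, map_add, aeval_X, Sum.elim_inl, Sum.elim_inr]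
  simp only [polarizedPowerSum, Finset.smul_sum]
  rw [Finset.sum_comm]
  refine Finset.sum_congr rfl fun i _ => ?_
  rw [add_comm, add_pow, ← Fin.sum_univ_eq_sum_range]
  refine Finset.sum_congr rfl fun j _ => ?_
  rw [smul_eq_C_mul]
  simp only [map_mul, map_pow, map_natCast, mul_pow]
  ring

theorem polarizedPowerSum_mem_Scal {p : ℕ × ℕ} (hp : p ≠ 0) :
    polarizedPowerSum n p ∈ Scal n := by
  obtain ⟨a, b⟩ := p
  set m := a + b
  let c : Fin (m + 1) → ℝ := fun k => k + 1
  let A := Matrix.vandermonde c * Matrix.diagonal fun j : Fin (m + 1) => (m.choose j : ℝ)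
  have hA : IsUnit A.det := by
    rw [isUnit_iff_ne_zero, Matrix.det_mul, Matrix.det_diagonal]
    refine mul_ne_zero (Matrix.det_vandermonde_ne_zero_iff.mpr fun i j h => ?_)
      (Finset.prod_ne_zero_iff.mpr fun j _ => ?_)
    · simpa [c, Fin.val_inj] using h
    · exact_mod_cast (Nat.choose_pos (by omega)).ne'
  have hgen : ∀ k : Fin (m + 1), ∑ j, A k j • polarizedPowerSum n (m - j, j) ∈ Scal n := by
    intro k
    have hk : Φ n ((k : ℤ) + 1) (ι n (psum _ ℝ m)) ∈ Scal n := Algebra.subset_adjoin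
      ⟨(k : ℤ) + 1, by omega, psum _ ℝ m, psum_isSymmetric _ _ m, rfl⟩
    rw [Φ_ι_psum] at hk
    simpa [A, c, Matrix.mul_diagonal, Matrix.vandermonde] using hk
  simpa [m] using
    Submodule.mem_of_forall_sum_smul_mem (Subalgebra.toSubmodule (Scal n)) hA hgen ⟨b, by omega⟩

end Multisymmetric

theorem stmt5_general (n : ℕ) (f : MvPolynomial (Fin n ⊕ Fin n) ℝ)
    (hf : ∀ σ : Equiv.Perm (Fin n), rename (Sum.map σ σ) f = f) :
    ∃ s ∈ Scal n, ∃ h ∈ Jtilde n, f = s + h :=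
  ⟨f, Multisymmetric.mem_of_invariant (fun _ => Multisymmetric.polarizedPowerSum_mem_Scal) hf,
    0, zero_mem _, (add_zero f).symm⟩

/-- every polynomial `f ∈ R` invariant under the diagonal `S_n`-action
lies in `𝒮 + J̃`. -/
theorem stmt5 (n : ℕ) (hn : 1 ≤ n) (f : MvPolynomial (Fin n ⊕ Fin n) ℝ)
    (hf : ∀ σ : Equiv.Perm (Fin n), rename (Sum.map σ σ) f = f) :
    ∃ s ∈ Scal n, ∃ h ∈ Jtilde n, f = s + h :=
  stmt5_general n f hf
end

section
/- Let J' ⊆ R be the ideal generated by all polynomials of positive degree in the variables x_1,…,x_n alone that are fixed by every signed permutation of x_1,…,x_n (equivalently, positive-degree symmetric polynomials in x_1^2,…,x_n^2). Let 𝒮' be the ℝ-subalgebra of R generated by {Φ^k(q(x_1+y_1,…,x_n+y_n)) : k ∈ ℤ \ {0}, q ∈ ℝ[z_1,…,z_n] fixed by every signed permutation of z_1,…,z_n}. Then every signed multisymmetric polynomial f ∈ R lies in 𝒮' + J'. (This is the algebraic form of the theorem that H*(B_com Sp(n); ℝ) ≅ (ℝ[x] ⊗ ℝ[y])^{W}/J'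 is generated as an ℝ-algebra by the sets Φ^k(Im ι), k ∈ ℤ \ {0}.) -/
/-!
Averaging a signed multisymmetric `f` over the hyperoctahedral group returns `|G| • f`, so it
suffices that the average of each monomial `x^α y^β` lies in `𝒮'`. The sign average vanishes
unless every `α_i + β_i` is even, and the permutation average is the augmented monomial
`Σ_{e injective} ∏_j x_{e j}^{α_j} y_{e j}^{β_j}`. A Newton-type recursion writes these as
polynomials in the polarized power sums `p_{a,b} = Σ_i x_i^a y_i^b` with `a + b` even, and
`p_{a,b}` is recovered from `Φ^k (ι (Σ_i z_i^(a+b))) = Σ_d k^d C(a+b, d) p_{a+b-d,d}` by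
Vandermonde interpolation at `k = 1, …, a + b + 1`.
-/

open MvPolynomial

/-- The action of a signed permutation `(ε, σ)` on `R`:
`x_i ↦ ε_i x_{σ(i)}`, `y_i ↦ ε_i y_{σ(i)}`. -/
noncomputable def sAct (n : ℕ) (ε : Fin n → ℤˣ) (σ : Equiv.Perm (Fin n)) :
    MvPolynomial (Fin n ⊕ Fin n) ℝ →ₐ[ℝ] MvPolynomial (Fin n ⊕ Fin n) ℝ :=
  aeval (Sum.elim (fun i => C ((ε i : ℤ) : ℝ) * X (Sum.inl (σ i)))
                  (fun i => C ((ε i : ℤ) : ℝ) * X (Sum.inr (σ i))))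

/-- The action of a signed permutation `(ε, σ)` on `ℝ[z_1,…,z_n]`: `z_i ↦ ε_i z_{σ(i)}`. -/
noncomputable def sActZ (n : ℕ) (ε : Fin n → ℤˣ) (σ : Equiv.Perm (Fin n)) :
    MvPolynomial (Fin n) ℝ →ₐ[ℝ] MvPolynomial (Fin n) ℝ :=
  aeval (fun i => C ((ε i : ℤ) : ℝ) * X (σ i))

/-- The ideal `J'` generated by the positive-degree polynomials in `x_1,…,x_n` alone
that are fixed by every signed permutation of `x_1,…,x_n`. -/
noncomputable def J' (n : ℕ) : Ideal (MvPolynomial (Fin n ⊕ Fin n) ℝ) :=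
  Ideal.span
    {f | ∃ g : MvPolynomial (Fin n) ℝ,
      (∀ (ε : Fin n → ℤˣ) (σ : Equiv.Perm (Fin n)), sActZ n ε σ g = g) ∧
      0 < g.totalDegree ∧ f = rename Sum.inl g}

/-- The subalgebra `𝒮'` generated by `Φ^k(q(x_1+y_1,…,x_n+y_n))` for `k ∈ ℤ \ {0}` and
`q ∈ ℝ[z_1,…,z_n]` fixed by every signed permutation. -/
noncomputable def S' (n : ℕ) : Subalgebra ℝ (MvPolynomial (Fin n ⊕ Fin n) ℝ) :=
  Algebra.adjoin ℝ
    {f | ∃ k : ℤ, k ≠ 0 ∧ ∃ q : MvPolynomial (Fin n) ℝ,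
      (∀ (ε : Fin n → ℤˣ) (σ : Equiv.Perm (Fin n)), sActZ n ε σ q = q) ∧
      f = Φ n k (ι n q)}


open Finset

section AugmentedMonomial

variable {ι κ A : Type*} [Fintype ι] [AddCommMonoid κ] [CommSemiring A] (φ : ι → κ → A)

def powerSum (a : κ) : A := ∑ i, φ i a

noncomputable def augMonomial {r : ℕ} (t : Fin r → κ) : A := ∑ e : Fin r ↪ ι, ∏ j, φ (e j) (t j)

variable {φ}

omit [Fintype ι] in
theorem prod_update_add_eq_mul (hφ : ∀ i a b, φ i (a + b) = φ i a * φ i b) {r : ℕ}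
    (e : Fin r → ι) (t : Fin r → κ) (j : Fin r) (a : κ) :
    ∏ j', φ (e j') (Function.update t j (a + t j) j') = φ (e j) a * ∏ j', φ (e j') (t j') := by
  rw [← mul_prod_erase univ _ (mem_univ j), ← mul_prod_erase univ (fun j' => φ (e j') (t j'))
    (mem_univ j), Function.update_self, hφ, mul_assoc]
  congr 2
  exact prod_congr rfl fun j' hj' => by rw [Function.update_of_ne (ne_of_mem_erase hj')]

omit [AddCommMonoid κ] in
theorem augMonomial_zero (t : Fin 0 → κ) : augMonomial φ t = 1 := by
  simp [augMonomial]

/-- Multiplying by a power sum either puts the new weight on an index outside the range of the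
embedding or adds it to one of the weights already present. -/
theorem powerSum_mul_augMonomial (hφ : ∀ i a b, φ i (a + b) = φ i a * φ i b) {r : ℕ}
    (a : κ) (t : Fin r → κ) :
    powerSum φ a * augMonomial φ t =
      augMonomial φ (Fin.cons a t : Fin (r + 1) → κ) +
        ∑ j, augMonomial φ (Function.update t j (a + t j)) := by
  classical
  have hsplit : ∀ e : Fin r ↪ ι, ∑ i, φ i a * ∏ j, φ (e j) (t j) =
      ∑ i : {i // i ∉ Set.range e}, φ i a * ∏ j, φ (e j) (t j) +
        ∑ j, ∏ j', φ (e j') (Function.update t j (a + t j) j') := by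
    intro e
    rw [← Fintype.sum_subtype_add_sum_subtype (· ∈ Set.range e), add_comm]
    congr 1
    convert Fintype.sum_equiv (Equiv.ofInjective e e.injective).symm
      (fun i => φ i a * ∏ j, φ (e j) (t j)) _ fun i => ?_
    obtain ⟨_, j, rfl⟩ := i
    simp [prod_update_add_eq_mul hφ]
  have hcons : ∑ p : (e : Fin r ↪ ι) × {i // i ∉ Set.range e},
      φ p.2 a * ∏ j, φ (p.1 j) (t j) = augMonomial φ (Fin.cons a t : Fin (r + 1) → κ) := by
    rw [augMonomial, ← (Equiv.embeddingFinSucc r ι).symm.sum_comp]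
    refine Fintype.sum_congr _ _ fun p => ?_
    simp [Fin.prod_univ_succ]
  rw [powerSum, augMonomial, sum_mul_sum, sum_comm, sum_congr rfl fun e _ => hsplit e,
    sum_add_distrib, ← hcons, Fintype.sum_sigma, sum_comm]
  simp only [augMonomial]

end AugmentedMonomial

theorem augMonomial_mem {ι κ A : Type*} [Fintype ι] [AddCommMonoid κ] [CommRing A]
    {φ : ι → κ → A} {S : Type*} [SetLike S A] [SubringClass S A] {s : S}
    (hφ : ∀ i a b, φ i (a + b) = φ i a * φ i b) {P : κ → Prop}
    (hP : ∀ a b, P a → P b → P (a + b)) (hpow : ∀ a, P a → powerSum φ a ∈ s) {r : ℕ}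
    (t : Fin r → κ) (ht : ∀ j, P (t j)) : augMonomial φ t ∈ s := by
  induction r with
  | zero => rw [augMonomial_zero]; exact one_mem s
  | succ r ih =>
    induction t using Fin.consCases with
    | cons a t =>
      rw [eq_sub_of_add_eq (powerSum_mul_augMonomial hφ a t).symm]
      refine sub_mem (mul_mem (hpow a (by simpa using ht 0))
        (ih t fun j => by simpa using ht j.succ))
        (sum_mem fun j _ => ih _ fun j' => ?_)
      rcases eq_or_ne j' j with rfl | hne
      · simpa using hP _ _ (by simpa using ht 0) (by simpa using ht j'.succ)
      · simpa [Function.update_of_ne hne] using ht j'.succ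

theorem sum_perm_prod_eq_augMonomial {κ A : Type*} [CommSemiring A] {n : ℕ} (φ : Fin n → κ → A)
    (t : Fin n → κ) :
    ∑ σ : Equiv.Perm (Fin n), ∏ j, φ (σ j) (t j) = augMonomial φ t := by
  rw [augMonomial, ← (Equiv.embeddingEquivOfFinite (Fin n)).sum_comp]
  rfl

theorem mem_of_forall_sum_pow_smul_mem {K M : Type*} [Field K] [AddCommGroup M] [Module K M]
    (p : Submodule K M) {N : ℕ} {x : Fin N → K} (hx : Function.Injective x) (c : Fin N → M)
    (hc : ∀ j, ∑ d : Fin N, x j ^ (d : ℕ) • c d ∈ p) (d : Fin N) : c d ∈ p := by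
  set V := Matrix.vandermonde x
  have hV : IsUnit V.det := isUnit_iff_ne_zero.2 (Matrix.det_vandermonde_ne_zero_iff.2 hx)
  have hinv : ∑ j, V⁻¹ d j • ∑ e : Fin N, x j ^ (e : ℕ) • c e = c d := by
    calc _ = ∑ e, (V⁻¹ * V) d e • c e := by
          simp_rw [smul_sum, smul_smul, Matrix.mul_apply, sum_smul]
          exact sum_comm
      _ = c d := by simp [Matrix.nonsing_inv_mul _ hV, Matrix.one_apply]
  rw [← hinv]
  exact sum_mem fun j _ => p.smul_mem _ (hc j)

noncomputable def xyMonomial (n : ℕ) (i : Fin n) (w : ℕ × ℕ) : MvPolynomial (Fin n ⊕ Fin n) ℝ :=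
  X (Sum.inl i) ^ w.1 * X (Sum.inr i) ^ w.2

theorem xyMonomial_add (n : ℕ) (i : Fin n) (v w : ℕ × ℕ) :
    xyMonomial n i (v + w) = xyMonomial n i v * xyMonomial n i w := by
  simp only [xyMonomial, Prod.fst_add, Prod.snd_add, pow_add]
  ring

theorem sActZ_sum_X_pow {n m : ℕ} (hm : Even m) (ε : Fin n → ℤˣ) (σ : Equiv.Perm (Fin n)) :
    sActZ n ε σ (∑ i, X i ^ m) = ∑ i, X i ^ m := by
  have hε : ∀ i, ((ε i : ℤ) : ℝ) ^ m = 1 := fun i => by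
    rcases Int.units_eq_one_or (ε i) with h | h <;> simp [h, hm.neg_one_pow]
  simp only [map_sum, map_pow, sActZ, aeval_X, mul_pow, ← C_pow, hε, C_1, one_mul]
  exact Equiv.sum_comp σ (fun i => X i ^ m)

theorem Φ_ι_sum_X_pow (n : ℕ) (k : ℤ) (m : ℕ) :
    Φ n k (ι n (∑ i, X i ^ m)) =
      ∑ d : Fin (m + 1), (k : ℝ) ^ (d : ℕ) •
        ((m.choose d : ℝ) • powerSum (xyMonomial n) (m - d, (d : ℕ))) := by
  simp only [map_sum, map_pow, ι, Φ, aeval_X, map_add, Sum.elim_inl, Sum.elim_inr, powerSum,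
    xyMonomial, smul_sum]
  rw [sum_comm]
  refine sum_congr rfl fun i _ => ?_
  rw [Fin.sum_univ_eq_sum_range (fun d => (k : ℝ) ^ d • (m.choose d : ℝ) •
    (X (Sum.inl i) ^ (m - d) * X (Sum.inr i) ^ d)) (m + 1), add_comm, add_pow]
  refine sum_congr rfl fun d _ => ?_
  rw [smul_smul, smul_eq_C_mul, mul_pow, ← C_pow, C_mul, ← map_natCast C]
  ring

theorem powerSum_xyMonomial_mem_S' (n a b : ℕ) (hab : Even (a + b)) :
    powerSum (xyMonomial n) (a, b) ∈ S' n := by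
  set m := a + b
  have hcoeff := mem_of_forall_sum_pow_smul_mem (Subalgebra.toSubmodule (S' n))
    (x := fun j : Fin (m + 1) => ((j : ℕ) : ℝ) + 1)
    (fun i j h => Fin.ext (by simpa using h))
    (fun d => (m.choose d : ℝ) • powerSum (xyMonomial n) (m - d, (d : ℕ)))
    (fun j => by
      have : Φ n (((j : ℕ) : ℤ) + 1) (ι n (∑ i, X i ^ m)) ∈ S' n :=
        Algebra.subset_adjoin ⟨_, by positivity, _, sActZ_sum_X_pow hab, rfl⟩
      rw [Φ_ι_sum_X_pow] at this
      simpa using this)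
    ⟨b, by omega⟩
  rw [Submodule.smul_mem_iff _ (Nat.cast_ne_zero.2 (Nat.choose_pos (by omega)).ne'),
    Subalgebra.mem_toSubmodule] at hcoeff
  simpa [show m - b = a by omega] using hcoeff

theorem sAct_monomial_one (n : ℕ) (ε : Fin n → ℤˣ) (σ : Equiv.Perm (Fin n))
    (m : (Fin n ⊕ Fin n) →₀ ℕ) :
    sAct n ε σ (monomial m 1) =
      (∏ i, ((ε i : ℤ) : ℝ) ^ (m (Sum.inl i) + m (Sum.inr i))) •
        ∏ i, xyMonomial n (σ i) (m (Sum.inl i), m (Sum.inr i)) := by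
  rw [monomial_eq, C_1, one_mul, Finsupp.prod_fintype _ _ fun _ => pow_zero _, map_prod,
    Fintype.prod_sum_type]
  simp only [map_pow, sAct, aeval_X, Sum.elim_inl, Sum.elim_inr, xyMonomial, mul_pow, pow_add,
    smul_eq_C_mul, map_mul, map_prod C, prod_mul_distrib]
  ring

theorem sum_units_pow_eq_zero {R : Type*} [Ring R] {c : ℕ} (hc : Odd c) :
    ∑ u : ℤˣ, ((u : ℤ) : R) ^ c = 0 := by
  rw [show (univ : Finset ℤˣ) = {1, -1} by decide, sum_pair (by decide)]
  simp [hc.neg_one_pow]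

theorem sum_sAct_monomial_one (n : ℕ) (m : (Fin n ⊕ Fin n) →₀ ℕ) :
    ∑ p : (Fin n → ℤˣ) × Equiv.Perm (Fin n), sAct n p.1 p.2 (monomial m 1) =
      (∏ i, ∑ u : ℤˣ, ((u : ℤ) : ℝ) ^ (m (Sum.inl i) + m (Sum.inr i))) •
        augMonomial (xyMonomial n) (fun i => (m (Sum.inl i), m (Sum.inr i))) := by
  rw [Fintype.prod_sum, ← sum_perm_prod_eq_augMonomial, sum_smul_sum, Fintype.sum_prod_type]
  simp_rw [sAct_monomial_one]

theorem sum_sAct_monomial_one_mem (n : ℕ) (m : (Fin n ⊕ Fin n) →₀ ℕ) :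
    ∑ p : (Fin n → ℤˣ) × Equiv.Perm (Fin n), sAct n p.1 p.2 (monomial m 1) ∈ S' n := by
  rw [sum_sAct_monomial_one]
  by_cases heven : ∀ i, Even (m (Sum.inl i) + m (Sum.inr i))
  · refine Subalgebra.smul_mem _ (augMonomial_mem (xyMonomial_add n)
      (P := fun w => Even (w.1 + w.2)) (fun v w hv hw => ?_)
      (fun w hw => powerSum_xyMonomial_mem_S' n w.1 w.2 hw) _ heven) _
    simpa [add_add_add_comm] using hv.add hw
  · obtain ⟨i, hi⟩ := not_forall.1 heven
    rw [prod_eq_zero (mem_univ i) (sum_units_pow_eq_zero (Nat.not_even_iff_odd.1 hi)), zero_smul]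
    exact zero_mem _

theorem sum_sAct_mem (n : ℕ) (f : MvPolynomial (Fin n ⊕ Fin n) ℝ) :
    ∑ p : (Fin n → ℤˣ) × Equiv.Perm (Fin n), sAct n p.1 p.2 f ∈ S' n := by
  induction f using MvPolynomial.induction_on' with
  | monomial u a =>
    rw [← mul_one a, ← smul_eq_mul, ← smul_monomial]
    simp_rw [map_smul, ← smul_sum]
    exact Subalgebra.smul_mem _ (sum_sAct_monomial_one_mem n u) a
  | add p q hp hq =>
    simp_rw [map_add, sum_add_distrib]
    exact add_mem hp hq

theorem mem_S'_of_forall_sAct_eq (n : ℕ) (f : MvPolynomial (Fin n ⊕ Fin n) ℝ)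
    (hf : ∀ (ε : Fin n → ℤˣ) (σ : Equiv.Perm (Fin n)), sAct n ε σ f = f) : f ∈ S' n := by
  have hsum := sum_sAct_mem n f
  simp only [hf, sum_const, card_univ, ← Nat.cast_smul_eq_nsmul ℝ] at hsum
  exact (Submodule.smul_mem_iff (Subalgebra.toSubmodule (S' n))
    (Nat.cast_ne_zero.2 Fintype.card_ne_zero)).1 hsum

theorem stmt12_general (n : ℕ) (f : MvPolynomial (Fin n ⊕ Fin n) ℝ)
    (hf : ∀ (ε : Fin n → ℤˣ) (σ : Equiv.Perm (Fin n)), sAct n ε σ f = f) :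
    ∃ s ∈ S' n, ∃ h ∈ J' n, f = s + h :=
  ⟨f, mem_S'_of_forall_sAct_eq n f hf, 0, zero_mem _, (add_zero f).symm⟩

/-- every signed multisymmetric polynomial `f ∈ R` lies in `𝒮' + J'`. -/
theorem stmt12 (n : ℕ) (hn : 1 ≤ n) (f : MvPolynomial (Fin n ⊕ Fin n) ℝ)
    (hf : ∀ (ε : Fin n → ℤˣ) (σ : Equiv.Perm (Fin n)), sAct n ε σ f = f) :
    ∃ s ∈ S' n, ∃ h ∈ J' n, f = s + h :=
  stmt12_general n f hf
end

section
/- Fix an even integer m ≥ 2. Define A_0 := Σ_{i=1}^n (x_i + y_i)^m ∈ R and, recursively, A_k := Φ^{k+1}(A_{k−1}) − (k+1)^k · A_{k−1} for 1 ≤ k ≤ m−1. Then A_{m−1} − (Π_{k=2}^m (k^m − k^{k−1})) · P_{0,m} ∈ J', where J' ⊆ R is the ideal generated by all polynomials of positive degree in the variables x_1,…,x_n alone that are fixed by every signed permutation of x_1,…,x_n (equivalently, positive-degree symmetric polynomials in x_1^2,…,x_n^2). -/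
open MvPolynomial

/-- `P n a b = ∑ i, x_i^a * y_i^b` in `R = ℝ[x_1,…,x_n,y_1,…,y_n]`,
where `x_i = X (Sum.inl i)` and `y_i = X (Sum.inr i)`. -/
noncomputable def P (n : ℕ) (a b : ℕ) : MvPolynomial (Fin n ⊕ Fin n) ℝ :=
  ∑ i : Fin n, X (Sum.inl i) ^ a * X (Sum.inr i) ^ b

/-!
Expanding `(x_i + y_i)^m` binomially, `A_0 = ∑_b (m choose b) P_{m-b,b}`. Since
`Φ^k P_{a,b} = k^b P_{a,b}`, each step of the recursion multiplies the coefficient of `P_{m-b,b}`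
by `(k+1)^b - (k+1)^k`, so after `m - 1` steps it carries the factor
`∏_{j=2}^m (j^b - j^{j-1})`, which vanishes for `0 < b < m` (take `j = b + 1`). Hence
`A_{m-1} = c · P_{m,0} + (∏_{k=2}^m (k^m - k^{k-1})) · P_{0,m}`, and `P_{m,0}` is the power sum
`∑ x_i^m`, which for even `m` is a positive-degree invariant of the signed permutations.
-/

open Finset

lemma Φ_P (n : ℕ) (k : ℤ) (a b : ℕ) : Φ n k (P n a b) = ((k : ℝ) ^ b) • P n a b := by
  simp only [Φ, P, map_sum, map_mul, map_pow, aeval_X, Sum.elim_inl, Sum.elim_inr,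
    smul_sum, mul_pow, smul_eq_C_mul]
  exact sum_congr rfl fun i _ => by ring

lemma sum_add_pow_eq_sum_P (n m : ℕ) :
    (∑ i : Fin n, (X (Sum.inl i) + X (Sum.inr i)) ^ m : MvPolynomial (Fin n ⊕ Fin n) ℝ)
      = ∑ b ∈ range (m + 1), (m.choose b : ℝ) • P n (m - b) b := by
  simp only [P, add_comm (X (Sum.inl _)), add_pow, smul_sum]
  rw [sum_comm]
  refine sum_congr rfl fun b _ => sum_congr rfl fun i _ => ?_
  rw [Nat.cast_smul_eq_nsmul, nsmul_eq_mul]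
  ring

lemma eq_sum_smul_P_of_rec {n m : ℕ} (A : ℕ → MvPolynomial (Fin n ⊕ Fin n) ℝ)
    (hA0 : A 0 = ∑ i : Fin n, (X (Sum.inl i) + X (Sum.inr i)) ^ m)
    (hArec : ∀ k : ℕ, 1 ≤ k → k ≤ m - 1 →
      A k = Φ n ((k : ℤ) + 1) (A (k - 1)) - (((k : ℝ) + 1) ^ k) • A (k - 1)) :
    ∀ k ≤ m - 1, A k = ∑ b ∈ range (m + 1),
      ((m.choose b : ℝ) * ∏ j ∈ Icc 2 (k + 1), ((j : ℝ) ^ b - (j : ℝ) ^ (j - 1))) •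
        P n (m - b) b := by
  intro k hk
  induction k with
  | zero => simpa [sum_add_pow_eq_sum_P] using hA0
  | succ k ih =>
    rw [hArec (k + 1) (by omega) hk, Nat.add_sub_cancel, ih (by omega), map_sum, smul_sum,
      ← sum_sub_distrib]
    refine sum_congr rfl fun b _ => ?_
    rw [map_smul, Φ_P, smul_smul, smul_smul, ← sub_smul, prod_Icc_succ_top (by omega : 2 ≤ k + 2)]
    push_cast
    congr 1
    ring

lemma prod_Icc_pow_sub_pow_pred_eq_zero {m b : ℕ} (hb : 0 < b) (hbm : b < m) :
    ∏ j ∈ Icc 2 m, ((j : ℝ) ^ b - (j : ℝ) ^ (j - 1)) = 0 :=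
  prod_eq_zero (i := b + 1) (mem_Icc.mpr ⟨by omega, hbm⟩) (by simp)

lemma totalDegree_psum {σ R : Type*} [Fintype σ] [Nonempty σ] [CommRing R] [CharZero R]
    (m : ℕ) : (psum σ R m).totalDegree = m := by
  refine IsHomogeneous.totalDegree (IsHomogeneous.sum _ _ _ fun i _ => isHomogeneous_X_pow i m)
    fun h => ?_
  have := congrArg (eval fun _ => (1 : R)) h
  simp [psum] at this

lemma sActZ_psum {n m : ℕ} (hm : Even m) (ε : Fin n → ℤˣ) (σ : Equiv.Perm (Fin n)) :
    sActZ n ε σ (psum (Fin n) ℝ m) = psum (Fin n) ℝ m := by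
  have hε : ∀ i, ((ε i : ℤ) : ℝ) ^ m = 1 := fun i => by
    rcases Int.units_eq_one_or (ε i) with h | h <;> simp [h, hm.neg_one_pow]
  simp only [sActZ, psum, map_sum, map_pow, aeval_X, mul_pow, ← C_pow, hε, map_one, one_mul]
  exact Equiv.sum_comp σ (X · ^ m)

lemma P_eq_rename_psum (n m : ℕ) : P n m 0 = rename Sum.inl (psum (Fin n) ℝ m) := by
  simp [P, psum]

lemma P_mem_J' {n m : ℕ} (hm : 0 < m) (hme : Even m) : P n m 0 ∈ J' n := by
  rcases n with _ | n
  · simp [P]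
  · exact Ideal.subset_span ⟨_, sActZ_psum hme, by rwa [totalDegree_psum], P_eq_rename_psum _ _⟩

theorem stmt13_general (n : ℕ) (m : ℕ) (hm : 2 ≤ m) (hme : Even m)
    (A : ℕ → MvPolynomial (Fin n ⊕ Fin n) ℝ)
    (hA0 : A 0 = ∑ i : Fin n, (X (Sum.inl i) + X (Sum.inr i)) ^ m)
    (hArec : ∀ k : ℕ, 1 ≤ k → k ≤ m - 1 →
      A k = Φ n ((k : ℤ) + 1) (A (k - 1)) - (((k : ℝ) + 1) ^ k) • A (k - 1)) :
    A (m - 1) - (∏ k ∈ Finset.Icc 2 m, ((k : ℝ) ^ m - (k : ℝ) ^ (k - 1))) • P n 0 m ∈ J' n := by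
  have hA := eq_sum_smul_P_of_rec A hA0 hArec (m - 1) le_rfl
  rw [Nat.sub_add_cancel (by omega)] at hA
  have hsplit : A (m - 1) = (∏ j ∈ Icc 2 m, (1 - (j : ℝ) ^ (j - 1))) • P n m 0
      + (∏ k ∈ Icc 2 m, ((k : ℝ) ^ m - (k : ℝ) ^ (k - 1))) • P n 0 m := by
    rw [hA, sum_eq_add_of_mem 0 m (by simp) (by simp) (by omega) fun b hb hb0m => ?_]
    · simp
    · rw [prod_Icc_pow_sub_pow_pred_eq_zero (by omega) (by rw [mem_range] at hb; omega), mul_zero,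
        zero_smul]
  rw [hsplit, add_sub_cancel_right]
  exact (J' n).smul_of_tower_mem _ (P_mem_J' (by omega) hme)

/-- for even `m ≥ 2`, with `A_0 = ∑ (x_i + y_i)^m` and
`A_k = Φ^{k+1}(A_{k-1}) − (k+1)^k · A_{k-1}` for `1 ≤ k ≤ m−1`, one has
`A_{m−1} − (∏_{k=2}^m (k^m − k^{k−1}))·P_{0,m} ∈ J'`. -/
theorem stmt13 (n : ℕ) (hn : 1 ≤ n) (m : ℕ) (hm : 2 ≤ m) (hme : Even m)
    (A : ℕ → MvPolynomial (Fin n ⊕ Fin n) ℝ)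
    (hA0 : A 0 = ∑ i : Fin n, (X (Sum.inl i) + X (Sum.inr i)) ^ m)
    (hArec : ∀ k : ℕ, 1 ≤ k → k ≤ m - 1 →
      A k = Φ n ((k : ℤ) + 1) (A (k - 1)) - (((k : ℝ) + 1) ^ k) • A (k - 1)) :
    A (m - 1) - (∏ k ∈ Finset.Icc 2 m, ((k : ℝ) ^ m - (k : ℝ) ^ (k - 1))) • P n 0 m ∈ J' n :=
  stmt13_general n m hm hme A hA0 hArec
end
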